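/- Let Y ∈ ℝ^{n×d}, β > 0, and let L : ℝ^n → ℝ be a convex, lower semicontinuous function. Let D_1, …, D_ℓ be the ReLU sign-pattern matrices of Y, and define the primal problem with m neurons p*_m = inf over u_1,…,u_m ∈ ℝ^d and v_1,…,v_m ∈ ℝ of L(Σ_{j=1}^m (Y u_j)_+ v_j) + (β/2) Σ_{j=1}^m (‖u_j‖_2² + |v_j|²), and the convex dual d* = inf over (w_i, z_i)_{i=1}^ℓ with (2D_i − I)Y w_i ≥ 0 and (2D_i − I)Y z_i ≥ 0 componentwise of L(Σ_{i=1}^ℓ D_i Y (w_i − z_i)) + β Σ_{i=1}^ℓ (‖w_i‖_2 + ‖z_i‖_2). Then there exists m* ≤ n such that for every m ≥ m* + 1, p*_m = d*. -/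

import Mathlib

/-!
A dual-feasible vector `wᵢ` is exactly a neuron whose activation pattern is `Dᵢ`, so
`Dᵢ Y wᵢ = (Y wᵢ)₊` and the dual output is `∑ᵢ ((Y wᵢ)₊ - (Y zᵢ)₊)`. Conversely, grouping the
neurons of a primal network by activation pattern and by the sign of their output weight turns it
into a dual-feasible point with the same output, and `|v| ‖u‖ ≤ (‖u‖² + v²) / 2` compares the
penalties. For the other inequality, divide the dual output by `r = ∑ᵢ (‖wᵢ‖ + ‖zᵢ‖)`: it lies in
the convex hull of the atoms `c (Y u)₊` with `‖u‖, |c| ≤ 1` in `ℝⁿ`, so by Carathéodory `n + 1`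
atoms suffice, and an atom with weight `t` is the neuron `(√t u, √t c)` of penalty at most `2t`.
-/

open Matrix Finset

noncomputable section

/-- Euclidean (ℓ2) norm of a vector in ℝ^k. -/
def l2 {k : ℕ} (x : Fin k → ℝ) : ℝ := Real.sqrt (∑ i, (x i) ^ 2)

/-- Componentwise ReLU. -/
def relu {k : ℕ} (x : Fin k → ℝ) : Fin k → ℝ := fun i => max (x i) 0

/-- The set of ReLU sign-pattern matrices of `Y`: diagonal 0/1 matrices
`Diag(1_{Yu ≥ 0})` as `u` ranges over the closed unit ball. -/
def signPatterns {n d : ℕ} (Y : Matrix (Fin n) (Fin d) ℝ) :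
    Set (Matrix (Fin n) (Fin n) ℝ) :=
  { M | ∃ u : Fin d → ℝ, l2 u ≤ 1 ∧
      M = Matrix.diagonal (fun i => if 0 ≤ Y.mulVec u i then (1 : ℝ) else 0) }

/-- Primal (non-convex) training objective with `m` neurons. -/
def primalObj {n d : ℕ} (Y : Matrix (Fin n) (Fin d) ℝ) (xs : Fin n → ℝ) (β : ℝ)
    (m : ℕ) (u : Fin m → Fin d → ℝ) (v : Fin m → ℝ) : ℝ :=
  (1 / 2) * l2 ((∑ j, v j • relu (Y.mulVec (u j))) - xs) ^ 2
    + (β / 2) * ∑ j, (l2 (u j) ^ 2 + |v j| ^ 2)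

/-- Optimal value of the primal training problem with `m` neurons. -/
def pStar {n d : ℕ} (Y : Matrix (Fin n) (Fin d) ℝ) (xs : Fin n → ℝ) (β : ℝ)
    (m : ℕ) : ℝ :=
  sInf { c | ∃ u : Fin m → Fin d → ℝ, ∃ v : Fin m → ℝ, c = primalObj Y xs β m u v }

/-- Dual feasibility: `(2 Dᵢ − I) Y wᵢ ≥ 0` componentwise for every `i`. -/
def dualFeasible {n d ℓ : ℕ} (Y : Matrix (Fin n) (Fin d) ℝ)
    (D : Fin ℓ → Matrix (Fin n) (Fin n) ℝ) (w : Fin ℓ → Fin d → ℝ) : Prop :=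
  ∀ i j, 0 ≤ ((2 • D i - 1).mulVec (Y.mulVec (w i))) j

/-- Convex dual objective. -/
def dualObj {n d ℓ : ℕ} (Y : Matrix (Fin n) (Fin d) ℝ) (xs : Fin n → ℝ) (β : ℝ)
    (D : Fin ℓ → Matrix (Fin n) (Fin n) ℝ) (w z : Fin ℓ → Fin d → ℝ) : ℝ :=
  (1 / 2) * l2 ((∑ i, (D i).mulVec (Y.mulVec (w i - z i))) - xs) ^ 2
    + β * ∑ i, (l2 (w i) + l2 (z i))

/-- Optimal value of the convex dual program. -/
def dStar {n d ℓ : ℕ} (Y : Matrix (Fin n) (Fin d) ℝ) (xs : Fin n → ℝ) (β : ℝ)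
    (D : Fin ℓ → Matrix (Fin n) (Fin n) ℝ) : ℝ :=
  sInf { c | ∃ w z : Fin ℓ → Fin d → ℝ,
    dualFeasible Y D w ∧ dualFeasible Y D z ∧ c = dualObj Y xs β D w z }

end

/-- Primal training objective with `m` neurons for a general loss `L`. -/
noncomputable def primalObjL {n d : ℕ} (Y : Matrix (Fin n) (Fin d) ℝ)
    (L : (Fin n → ℝ) → ℝ) (β : ℝ) (m : ℕ)
    (u : Fin m → Fin d → ℝ) (v : Fin m → ℝ) : ℝ :=
  L (∑ j, v j • relu (Y.mulVec (u j)))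
    + (β / 2) * ∑ j, (l2 (u j) ^ 2 + |v j| ^ 2)

/-- Convex dual objective for a general loss `L`. -/
noncomputable def dualObjL {n d ℓ : ℕ} (Y : Matrix (Fin n) (Fin d) ℝ)
    (L : (Fin n → ℝ) → ℝ) (β : ℝ)
    (D : Fin ℓ → Matrix (Fin n) (Fin n) ℝ) (w z : Fin ℓ → Fin d → ℝ) : ℝ :=
  L (∑ i, (D i).mulVec (Y.mulVec (w i - z i)))
    + β * ∑ i, (l2 (w i) + l2 (z i))

lemma l2_eq_norm {k : ℕ} (x : Fin k → ℝ) :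
    l2 x = ‖(WithLp.toLp 2 x : EuclideanSpace ℝ (Fin k))‖ := by
  simp only [l2, EuclideanSpace.norm_eq, Real.norm_eq_abs, sq_abs]

lemma l2_nonneg {k : ℕ} (x : Fin k → ℝ) : 0 ≤ l2 x := Real.sqrt_nonneg _

lemma l2_eq_zero {k : ℕ} {x : Fin k → ℝ} : l2 x = 0 ↔ x = 0 := by
  rw [l2_eq_norm, norm_eq_zero, WithLp.toLp_eq_zero]

lemma l2_smul {k : ℕ} (c : ℝ) (x : Fin k → ℝ) : l2 (c • x) = |c| * l2 x := by
  rw [l2_eq_norm, WithLp.toLp_smul, norm_smul, Real.norm_eq_abs, l2_eq_norm]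

lemma l2_sum_le {k : ℕ} {ι : Type*} (s : Finset ι) (f : ι → Fin k → ℝ) :
    l2 (∑ j ∈ s, f j) ≤ ∑ j ∈ s, l2 (f j) := by
  simpa only [l2_eq_norm, WithLp.toLp_sum] using norm_sum_le s fun j => WithLp.toLp 2 (f j)

@[simp]
lemma relu_zero {k : ℕ} : relu (0 : Fin k → ℝ) = 0 := by
  funext i; simp [relu]

lemma relu_smul_of_nonneg {k : ℕ} {t : ℝ} (ht : 0 ≤ t) (x : Fin k → ℝ) :
    relu (t • x) = t • relu x := by
  funext i
  simp only [relu, Pi.smul_apply, smul_eq_mul, mul_max_of_nonneg _ _ ht, mul_zero]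

lemma diagonal_indicator_mulVec_eq_relu_iff {k : ℕ} (p : Fin k → Prop) [DecidablePred p]
    (x : Fin k → ℝ) :
    diagonal (fun i => if p i then (1 : ℝ) else 0) *ᵥ x = relu x ↔
      ∀ j, 0 ≤ ((2 • diagonal (fun i => if p i then (1 : ℝ) else 0) - 1) *ᵥ x) j := by
  simp only [sub_mulVec, two_nsmul, add_mulVec, one_mulVec, mulVec_diagonal, Pi.sub_apply,
    Pi.add_apply, funext_iff, relu]
  refine forall_congr' fun j => ?_
  split_ifs <;> simp

/-- Carathéodory's theorem for nonnegative combinations, padded with zero weights to exactly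
`m` terms. -/
theorem exists_fin_sum_smul_eq_of_nonneg {𝕜 E ι : Type*} [Field 𝕜] [LinearOrder 𝕜]
    [IsStrictOrderedRing 𝕜] [AddCommGroup E] [Module 𝕜 E] [FiniteDimensional 𝕜 E]
    [Fintype ι] {s : Set E} (hs : s.Nonempty) {ω : ι → 𝕜} (hω : ∀ i, 0 ≤ ω i)
    {g : ι → E} (hg : ∀ i, g i ∈ s) {m : ℕ} (hm : Module.finrank 𝕜 E + 1 ≤ m) :
    ∃ (t : Fin m → 𝕜) (a : Fin m → E), (∀ k, 0 ≤ t k) ∧ (∀ k, a k ∈ s) ∧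
      ∑ k, t k = ∑ i, ω i ∧ ∑ k, t k • a k = ∑ i, ω i • g i := by
  obtain ⟨x₀, hx₀⟩ := hs
  rcases (sum_nonneg fun i _ => hω i).eq_or_lt with hr | hr
  · have hω0 : ∀ i, ω i = 0 := fun i =>
      (sum_eq_zero_iff_of_nonneg fun i _ => hω i).mp hr.symm i (mem_univ i)
    exact ⟨0, fun _ => x₀, fun _ => le_rfl, fun _ => hx₀, by simp [hω0], by simp [hω0]⟩
  set r := ∑ i, ω i
  have hmem : r⁻¹ • ∑ i, ω i • g i ∈ convexHull 𝕜 s :=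
    centerMass_mem_convexHull univ (fun i _ => hω i) hr (fun i _ => hg i)
  obtain ⟨κ, _, z, w, hzs, hz, hw, hw1, hwz⟩ := eq_pos_convex_span_of_mem_convexHull hmem
  obtain ⟨e⟩ : Nonempty (κ ↪ Fin m) := Function.Embedding.nonempty_of_card_le <| by
    simpa using hz.card_le_finrank_succ.trans
      ((Nat.add_le_add_right (Submodule.finrank_le _) 1).trans hm)
  set t := Function.extend e (fun j => r * w j) 0
  set a := Function.extend e z fun _ => x₀
  have ht_off (k) (hk : k ∉ Set.range e) : t k = 0 := Function.extend_apply' _ _ _ hk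
  have ha_off (k) (hk : k ∉ Set.range e) : a k = x₀ := Function.extend_apply' _ _ _ hk
  have ht (j) : t (e j) = r * w j := e.injective.extend_apply _ _ j
  have ha (j) : a (e j) = z j := e.injective.extend_apply _ _ j
  refine ⟨t, a, fun k => ?_, fun k => ?_, ?_, ?_⟩
  · rcases em (k ∈ Set.range e) with ⟨j, rfl⟩ | hk
    · rw [ht]; exact mul_nonneg hr.le (hw j).le
    · rw [ht_off k hk]
  · rcases em (k ∈ Set.range e) with ⟨j, rfl⟩ | hk
    · rw [ha]; exact hzs ⟨j, rfl⟩
    · rw [ha_off k hk]; exact hx₀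
  · rw [← Fintype.sum_of_injective e e.injective _ _ ht_off fun j => (ht j).symm, ← mul_sum,
      hw1, mul_one]
  · rw [← Fintype.sum_of_injective e e.injective (fun j => (r * w j) • z j) _
      (fun k hk => by rw [ht_off k hk, zero_smul]) fun j => by rw [ht, ha]]
    simp_rw [mul_smul, ← smul_sum, hwz, smul_inv_smul₀ hr.ne']

section ReLU

variable {n d : ℕ} (Y : Matrix (Fin n) (Fin d) ℝ)

noncomputable def signPattern (u : Fin d → ℝ) : Matrix (Fin n) (Fin n) ℝ :=
  diagonal fun i => if 0 ≤ (Y *ᵥ u) i then 1 else 0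

lemma signPattern_mem_signPatterns (u : Fin d → ℝ) : signPattern Y u ∈ signPatterns Y := by
  have hpos : 0 < (l2 u + 1)⁻¹ := inv_pos.mpr (by linarith [l2_nonneg u])
  refine ⟨(l2 u + 1)⁻¹ • u, ?_, ?_⟩
  · rw [l2_smul, abs_of_pos hpos, inv_mul_le_one₀ (by linarith [l2_nonneg u])]
    linarith
  · simp only [signPattern, mulVec_smul, Pi.smul_apply, smul_eq_mul,
      mul_nonneg_iff_of_pos_left hpos]

lemma signPattern_mulVec_self (u : Fin d → ℝ) :
    signPattern Y u *ᵥ (Y *ᵥ u) = relu (Y *ᵥ u) := by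
  funext j
  by_cases h : 0 ≤ (Y *ᵥ u) j <;> simp [signPattern, relu, mulVec_diagonal, h, le_of_not_ge]

lemma mulVec_eq_relu_of_mem_signPatterns {D : Matrix (Fin n) (Fin n) ℝ}
    (hD : D ∈ signPatterns Y) {x : Fin n → ℝ} (hx : ∀ j, 0 ≤ ((2 • D - 1) *ᵥ x) j) :
    D *ᵥ x = relu x := by
  obtain ⟨u, -, rfl⟩ := hD
  exact (diagonal_indicator_mulVec_eq_relu_iff _ x).mpr hx

def reluAtoms : Set (Fin n → ℝ) :=
  {a | ∃ (u : Fin d → ℝ) (c : ℝ), l2 u ≤ 1 ∧ |c| ≤ 1 ∧ a = c • relu (Y *ᵥ u)}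

lemma exists_mem_reluAtoms_smul_eq {σ : ℝ} (hσ : |σ| ≤ 1) (x : Fin d → ℝ) :
    ∃ a ∈ reluAtoms Y, σ • relu (Y *ᵥ x) = l2 x • a := by
  rcases eq_or_ne x 0 with rfl | hx
  · exact ⟨0, ⟨0, 0, by simp [l2], by simp, by simp⟩, by simp⟩
  have hl : 0 < l2 x := (l2_nonneg x).lt_of_ne' (l2_eq_zero.not.mpr hx)
  refine ⟨σ • relu (Y *ᵥ ((l2 x)⁻¹ • x)), ⟨_, σ, ?_, hσ, rfl⟩, ?_⟩
  · rw [l2_smul, abs_of_pos (inv_pos.mpr hl), inv_mul_cancel₀ hl.ne']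
  · rw [mulVec_smul, relu_smul_of_nonneg (inv_nonneg.mpr hl.le), smul_comm σ,
      smul_inv_smul₀ hl.ne']

lemma exists_neuron_of_mem_reluAtoms {a : Fin n → ℝ} (ha : a ∈ reluAtoms Y) {t : ℝ}
    (ht : 0 ≤ t) : ∃ u v, v • relu (Y *ᵥ u) = t • a ∧ l2 u ^ 2 + |v| ^ 2 ≤ 2 * t := by
  obtain ⟨u, c, hu, hc, rfl⟩ := ha
  have hsq : √t * √t = t := Real.mul_self_sqrt ht
  refine ⟨√t • u, √t * c, ?_, ?_⟩
  · rw [mulVec_smul, relu_smul_of_nonneg (Real.sqrt_nonneg t), smul_smul, smul_smul,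
      mul_right_comm, hsq]
  · rw [l2_smul, abs_mul, abs_of_nonneg (Real.sqrt_nonneg t), mul_pow, mul_pow,
      Real.sq_sqrt ht]
    nlinarith [pow_le_one₀ (n := 2) (l2_nonneg u) hu, pow_le_one₀ (n := 2) (abs_nonneg c) hc]

theorem exists_network_eq_sum_relu_sub {ℓ m : ℕ} (hm : n + 1 ≤ m) (w z : Fin ℓ → Fin d → ℝ) :
    ∃ (u : Fin m → Fin d → ℝ) (v : Fin m → ℝ),
      ∑ k, v k • relu (Y *ᵥ u k) = ∑ i, (relu (Y *ᵥ w i) - relu (Y *ᵥ z i)) ∧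
      ∑ k, (l2 (u k) ^ 2 + |v k| ^ 2) ≤ 2 * ∑ i, (l2 (w i) + l2 (z i)) := by
  choose aw haw hw using fun i => exists_mem_reluAtoms_smul_eq Y (σ := 1) (by simp) (w i)
  choose az haz hz using fun i => exists_mem_reluAtoms_smul_eq Y (σ := -1) (by simp) (z i)
  obtain ⟨t, a, ht, ha, hsum, hrepr⟩ := exists_fin_sum_smul_eq_of_nonneg
    ⟨0, 0, 0, by simp [l2], by simp, by simp⟩
    (s := reluAtoms Y) (ω := Sum.elim (fun i => l2 (w i)) fun i => l2 (z i)) (g := Sum.elim aw az)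
    (by rintro (i | i) <;> exact l2_nonneg _) (by rintro (i | i) <;> simp [haw, haz])
    (m := m) (by simpa using hm)
  choose u v huv hreg using fun k => exists_neuron_of_mem_reluAtoms Y (ha k) (ht k)
  refine ⟨u, v, ?_, ?_⟩
  · simp only [huv, hrepr, Fintype.sum_sum_type, Sum.elim_inl, Sum.elim_inr, ← hw, ← hz,
      one_smul, neg_one_smul, sub_eq_add_neg, sum_add_distrib, sum_neg_distrib]
  · calc ∑ k, (l2 (u k) ^ 2 + |v k| ^ 2) ≤ ∑ k, 2 * t k := sum_le_sum fun k _ => hreg k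
      _ = 2 * ∑ i, (l2 (w i) + l2 (z i)) := by
        rw [← mul_sum, hsum, Fintype.sum_sum_type, sum_add_distrib]
        rfl

end ReLU

section Duality

variable {n d ℓ : ℕ} (Y : Matrix (Fin n) (Fin d) ℝ) (L : (Fin n → ℝ) → ℝ) {β : ℝ}
  {D : Fin ℓ → Matrix (Fin n) (Fin n) ℝ}

theorem exists_primalObjL_le_dualObjL (hβ : 0 ≤ β) (hD : Set.range D ⊆ signPatterns Y)
    {m : ℕ} (hm : n + 1 ≤ m) {w z : Fin ℓ → Fin d → ℝ} (hw : dualFeasible Y D w)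
    (hz : dualFeasible Y D z) :
    ∃ u v, primalObjL Y L β m u v ≤ dualObjL Y L β D w z := by
  have hD' (i) : D i ∈ signPatterns Y := hD ⟨i, rfl⟩
  obtain ⟨u, v, hout, hreg⟩ := exists_network_eq_sum_relu_sub Y hm w z
  refine ⟨u, v, ?_⟩
  have hdual : ∑ i, D i *ᵥ (Y *ᵥ (w i - z i)) = ∑ i, (relu (Y *ᵥ w i) - relu (Y *ᵥ z i)) := by
    simp only [mulVec_sub, mulVec_eq_relu_of_mem_signPatterns Y (hD' _) (hw _),
      mulVec_eq_relu_of_mem_signPatterns Y (hD' _) (hz _)]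
  unfold primalObjL dualObjL
  rw [hout, hdual]
  nlinarith [mul_le_mul_of_nonneg_left hreg hβ]

theorem exists_dualObjL_le_primalObjL (hβ : 0 ≤ β) (hD : signPatterns Y ⊆ Set.range D)
    {m : ℕ} (u : Fin m → Fin d → ℝ) (v : Fin m → ℝ) :
    ∃ w z, dualFeasible Y D w ∧ dualFeasible Y D z ∧
      dualObjL Y L β D w z ≤ primalObjL Y L β m u v := by
  choose idx hidx using fun j => hD (signPattern_mem_signPatterns Y (u j))
  have hfeas (c : Fin m → ℝ) (hc : ∀ j, 0 ≤ c j) :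
      dualFeasible Y D fun i => ∑ j with idx j = i, c j • u j := by
    intro i
    refine Pi.le_def.mp ?_
    simp only [mulVec_sum, mulVec_smul]
    refine sum_nonneg fun j hj => smul_nonneg (hc j) ?_
    rw [← (mem_filter.mp hj).2, hidx]
    exact Pi.le_def.mpr
      ((diagonal_indicator_mulVec_eq_relu_iff _ _).mp (signPattern_mulVec_self Y _))
  refine ⟨_, _, hfeas _ fun j => posPart_nonneg (v j), hfeas _ fun j => negPart_nonneg (v j), ?_⟩
  have hout : ∑ i, D i *ᵥ (Y *ᵥ ((∑ j with idx j = i, (v j)⁺ • u j) -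
      ∑ j with idx j = i, (v j)⁻ • u j)) = ∑ j, v j • relu (Y *ᵥ u j) := by
    simp only [← sum_sub_distrib, ← sub_smul, posPart_sub_negPart, mulVec_sum, mulVec_smul]
    rw [← sum_fiberwise univ idx]
    refine sum_congr rfl fun i _ => sum_congr rfl fun j hj => ?_
    rw [← (mem_filter.mp hj).2, hidx, signPattern_mulVec_self]
  have hreg : ∑ i, (l2 (∑ j with idx j = i, (v j)⁺ • u j) +
      l2 (∑ j with idx j = i, (v j)⁻ • u j)) ≤ ∑ j, |v j| * l2 (u j) := by
    rw [← sum_fiberwise univ idx]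
    refine sum_le_sum fun i _ => (add_le_add (l2_sum_le _ _) (l2_sum_le _ _)).trans_eq ?_
    simp only [← sum_add_distrib, l2_smul, abs_of_nonneg (posPart_nonneg _),
      abs_of_nonneg (negPart_nonneg _), ← add_mul, posPart_add_negPart]
  have hamgm : ∑ j, |v j| * l2 (u j) ≤ (1 / 2) * ∑ j, (l2 (u j) ^ 2 + |v j| ^ 2) := by
    rw [mul_sum]
    exact sum_le_sum fun j _ => by nlinarith [two_mul_le_add_sq (l2 (u j)) (|v j|)]
  unfold primalObjL dualObjL
  rw [hout]
  nlinarith [mul_le_mul_of_nonneg_left (hreg.trans hamgm) hβ]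

end Duality

theorem strong_duality_general_loss_general {n d ℓ : ℕ} (Y : Matrix (Fin n) (Fin d) ℝ)
    (β : ℝ) (hβ : 0 < β) (L : (Fin n → ℝ) → ℝ)
    (D : Fin ℓ → Matrix (Fin n) (Fin n) ℝ)
    (hrange : Set.range D = signPatterns Y) :
    ∃ mstar ≤ n, ∀ m ≥ mstar + 1,
      sInf { c | ∃ u : Fin m → Fin d → ℝ, ∃ v : Fin m → ℝ,
          c = primalObjL Y L β m u v }
        = sInf { c | ∃ w z : Fin ℓ → Fin d → ℝ,
            dualFeasible Y D w ∧ dualFeasible Y D z ∧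
            c = dualObjL Y L β D w z } := by
  refine ⟨n, le_rfl, fun m hm => csInf_eq_csInf_of_forall_exists_le ?_ ?_⟩
  · rintro _ ⟨u, v, rfl⟩
    obtain ⟨w, z, hw, hz, hle⟩ := exists_dualObjL_le_primalObjL Y L hβ.le hrange.superset u v
    exact ⟨_, ⟨w, z, hw, hz, rfl⟩, hle⟩
  · rintro _ ⟨w, z, hw, hz, rfl⟩
    obtain ⟨u, v, hle⟩ := exists_primalObjL_le_dualObjL Y L hβ.le hrange.subset hm hw hz
    exact ⟨_, ⟨u, v, rfl⟩, hle⟩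

/-- **Strong duality for general convex losses.** For a convex,
lower semicontinuous loss `L`, there exists `m* ≤ n` such that for every
`m ≥ m* + 1` the primal optimal value with `m` neurons equals the convex dual
optimal value. -/
theorem strong_duality_general_loss {n d ℓ : ℕ} (Y : Matrix (Fin n) (Fin d) ℝ)
    (β : ℝ) (hβ : 0 < β) (L : (Fin n → ℝ) → ℝ)
    (hL : ConvexOn ℝ Set.univ L) (hlsc : LowerSemicontinuous L)
    (D : Fin ℓ → Matrix (Fin n) (Fin n) ℝ)
    (hinj : Function.Injective D) (hrange : Set.range D = signPatterns Y) :
    ∃ mstar ≤ n, ∀ m ≥ mstar + 1,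
      sInf { c | ∃ u : Fin m → Fin d → ℝ, ∃ v : Fin m → ℝ,
          c = primalObjL Y L β m u v }
        = sInf { c | ∃ w z : Fin ℓ → Fin d → ℝ,
            dualFeasible Y D w ∧ dualFeasible Y D z ∧
            c = dualObjL Y L β D w z } :=
  strong_duality_general_loss_general Y β hβ L D hrange
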